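/- Let V be a real vector space of finite dimension m. Every maximal isotropic subspace L of V ⊕ V* is of the form L(E,ε): there exist a subspace E ≤ V and a skew-symmetric bilinear form ε on E such that L = L(E,ε); moreover one may take E = π_V(L), the image of L under the projection V ⊕ V* → V. -/

import Mathlib

open Module

/-- The canonical symmetric bilinear form on `V ⊕ V*`,
`⟨X+ξ, Y+η⟩ = (1/2)(ξ(Y) + η(X))`. -/
noncomputable def canForm (V : Type*) [AddCommGroup V] [Module ℝ V] :
    LinearMap.BilinForm ℝ (V × Module.Dual ℝ V) :=
  LinearMap.mk₂ ℝ (fun p q => (p.2 q.1 + q.2 p.1) / 2)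
    (fun p p' q => by simp; ring)
    (fun c p q => by simp; ring)
    (fun p q q' => by simp; ring)
    (fun c p q => by simp; ring)

/-- The maximal isotropic subspace `L(E,ε) = {X + ξ ∈ E ⊕ V* : ξ|_E = ε(X)}`
determined by a subspace `E ≤ V` and a bilinear form `ε` on `E`. -/
noncomputable def LEeps {V : Type*} [AddCommGroup V] [Module ℝ V]
    (E : Submodule ℝ V) (ε : E →ₗ[ℝ] E →ₗ[ℝ] ℝ) :
    Submodule ℝ (V × Module.Dual ℝ V) where
  carrier := {p | ∃ h : p.1 ∈ E, ∀ y : E, p.2 y.1 = ε ⟨p.1, h⟩ y}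
  add_mem' := by
    rintro p q ⟨hp, hp2⟩ ⟨hq, hq2⟩
    refine ⟨add_mem hp hq, fun y => ?_⟩
    have h1 : (⟨(p + q).1, add_mem hp hq⟩ : E) = ⟨p.1, hp⟩ + ⟨q.1, hq⟩ := rfl
    rw [h1, map_add]
    simp [hp2 y, hq2 y]
  zero_mem' := ⟨zero_mem E, fun y => by
    have h1 : (⟨(0 : V × Module.Dual ℝ V).1, zero_mem E⟩ : E) = 0 := rfl
    rw [h1, map_zero]
    simp⟩
  smul_mem' := by
    rintro c p ⟨hp, hp2⟩
    refine ⟨Submodule.smul_mem E c hp, fun y => ?_⟩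
    have h1 : (⟨(c • p).1, Submodule.smul_mem E c hp⟩ : E) = c • (⟨p.1, hp⟩ : E) := rfl
    rw [h1, map_smul]
    simp [hp2 y]

/-- Every maximal isotropic subspace `L` of `V ⊕ V*` is of the form `L(E,ε)`
with `E = π_V(L)` and `ε` a skew form on `E`. -/
theorem maximal_isotropic_eq_LEeps
    (V : Type*) [AddCommGroup V] [Module ℝ V] [FiniteDimensional ℝ V]
    (m : ℕ) (hm : Module.finrank ℝ V = m)
    (L : Submodule ℝ (V × Module.Dual ℝ V))
    (hiso : ∀ p ∈ L, ∀ q ∈ L, canForm V p q = 0)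
    (hdim : Module.finrank ℝ L = m) :
    ∃ ε : (L.map (LinearMap.fst ℝ V (Module.Dual ℝ V))) →ₗ[ℝ]
        (L.map (LinearMap.fst ℝ V (Module.Dual ℝ V))) →ₗ[ℝ] ℝ,
      (∀ x y, ε x y = - ε y x) ∧
      L = LEeps (L.map (LinearMap.fst ℝ V (Module.Dual ℝ V))) ε := by
  classical
  set E : Submodule ℝ V := L.map (LinearMap.fst ℝ V (Module.Dual ℝ V)) with hE
  -- the canonical form is symmetric, hence reflexive
  have hsymm : ∀ p q : V × Module.Dual ℝ V, canForm V p q = canForm V q p := by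
    intro p q; simp [canForm]; ring
  have hrefl : (canForm V).IsRefl := by
    intro p q h; rw [hsymm]; exact h
  -- nondegenerate
  have hnd : (canForm V).Nondegenerate := by
    refine (LinearMap.IsRefl.nondegenerate_iff_separatingLeft hrefl).2 ?_
    intro p hp
    have h1 : p.2 = 0 := by
      ext y
      have := hp (y, 0)
      simpa [canForm] using this
    have h2 : p.1 = 0 := by
      rw [← Module.forall_dual_apply_eq_zero_iff ℝ]
      intro η
      have := hp (0, η)
      simp [canForm, h1] at this
      simpa using this
    exact Prod.ext h2 h1
  -- L ≤ its orthogonal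
  have hLle : L ≤ (canForm V).orthogonal L := by
    intro p hp
    rw [LinearMap.BilinForm.mem_orthogonal_iff]
    intro q hq
    exact hiso q hq p hp
  -- dimension count : finrank (V × V*) = 2m
  have hdimVV : Module.finrank ℝ (V × Module.Dual ℝ V) = m + m := by
    rw [Module.finrank_prod, hm, Subspace.dual_finrank_eq, hm]
  have horthdim : Module.finrank ℝ ((canForm V).orthogonal L) = m := by
    rw [LinearMap.BilinForm.finrank_orthogonal hnd L, hdimVV, hdim]
    omega
  have hLeq' : (canForm V).orthogonal L = L :=
    (Submodule.eq_of_le_of_finrank_eq hLle (by rw [horthdim, hdim])).symm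
  -- key: if ζ vanishes on E then (0, ζ) ∈ L
  have hkey : ∀ ζ : Module.Dual ℝ V, (∀ x ∈ E, ζ x = 0) → ((0 : V), ζ) ∈ L := by
    intro ζ hζ
    rw [← hLeq']
    rw [LinearMap.BilinForm.mem_orthogonal_iff]
    intro q hq
    have hq1 : q.1 ∈ E := ⟨q, hq, rfl⟩
    simp [LinearMap.BilinForm.IsOrtho, canForm, hζ q.1 hq1]
  -- members of L with zero first component have dual vanishing on E
  have hker : ∀ p ∈ L, p.1 = 0 → ∀ x ∈ E, p.2 x = 0 := by
    intro p hp hp1 x hx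
    obtain ⟨q, hq, hq1⟩ := hx
    have := hiso p hp q hq
    rw [← hq1]
    simp [canForm, hp1] at this
    exact this
  -- projection L → E and its section
  let π : L →ₗ[ℝ] E :=
    { toFun := fun p => ⟨p.1.1, ⟨p.1, p.2, rfl⟩⟩
      map_add' := fun p q => rfl
      map_smul' := fun c p => rfl }
  have hπsurj : Function.Surjective π := by
    rintro ⟨x, q, hq, hq1⟩
    exact ⟨⟨q, hq⟩, Subtype.ext hq1⟩
  obtain ⟨σ, hσ⟩ := π.exists_rightInverse_of_surjective (LinearMap.range_eq_top.2 hπsurj)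
  have hσ1 : ∀ x : E, ((σ x : V × Module.Dual ℝ V)).1 = x.1 := by
    intro x
    have := congrArg (fun f => (f x).1) hσ
    simpa [π] using congrArg Subtype.val (LinearMap.congr_fun hσ x)
  -- define ε
  let ε : E →ₗ[ℝ] E →ₗ[ℝ] ℝ :=
    { toFun := fun x => ((σ x : V × Module.Dual ℝ V).2).comp E.subtype
      map_add' := fun x y => by ext z; simp
      map_smul' := fun c x => by ext z; simp }
  have hεdef : ∀ x y : E, ε x y = (σ x : V × Module.Dual ℝ V).2 y.1 := fun _ _ => rfl
  -- well-definedness: for p ∈ L, p.2 agrees with ε ⟨p.1⟩ on E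
  have hwd : ∀ p ∈ L, ∀ h : p.1 ∈ E, ∀ y : E, p.2 y.1 = ε ⟨p.1, h⟩ y := by
    intro p hp h y
    set d : V × Module.Dual ℝ V := p - (σ ⟨p.1, h⟩ : V × Module.Dual ℝ V) with hd
    have hdL : d ∈ L := sub_mem hp (σ ⟨p.1, h⟩).2
    have hd1 : d.1 = 0 := by
      simp [hd, hσ1 ⟨p.1, h⟩]
    have := hker d hdL hd1 y.1 y.2
    have h2 : p.2 y.1 - (σ ⟨p.1, h⟩ : V × Module.Dual ℝ V).2 y.1 = 0 := this
    rw [hεdef]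
    linarith
  refine ⟨ε, ?_, ?_⟩
  · -- skew-symmetry
    intro x y
    have hx := (σ x).2
    have hy := (σ y).2
    have := hiso _ hx _ hy
    simp [canForm] at this
    rw [hεdef, hεdef, hσ1 x, hσ1 y] at *
    linarith
  · -- L = L(E, ε)
    apply le_antisymm
    · intro p hp
      exact ⟨⟨p, hp, rfl⟩, hwd p hp ⟨p, hp, rfl⟩⟩
    · rintro ⟨x, ξ⟩ ⟨h, h2⟩
      set p : V × Module.Dual ℝ V := (σ ⟨x, h⟩ : V × Module.Dual ℝ V) with hpd
      have hpL : p ∈ L := (σ ⟨x, h⟩).2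
      have hp1 : p.1 = x := hσ1 ⟨x, h⟩
      set ζ : Module.Dual ℝ V := ξ - p.2 with hζd
      have hζE : ∀ z ∈ E, ζ z = 0 := by
        intro z hz
        have := h2 ⟨z, hz⟩
        have hmem : p.1 ∈ E := by rw [hp1]; exact h
        have hsub : (⟨p.1, hmem⟩ : E) = ⟨x, h⟩ := Subtype.ext hp1
        have h3 : p.2 z = ε ⟨x, h⟩ ⟨z, hz⟩ := by
          have h4 := hwd p hpL hmem ⟨z, hz⟩
          rw [h4, hsub]
        simp [hζd]
        rw [this, h3]
        ring
      have hzL : ((0 : V), ζ) ∈ L := hkey ζ hζE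
      have : (x, ξ) = p + ((0 : V), ζ) := by
        ext
        · simp [hp1]
        · simp [hζd]
      rw [this]
      exact add_mem hpL hzL
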